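/- There exist a positive integer L_Z and, for each of the eight nodes A1, A2, A3, A4, B1, B2, B3, B4, matrices F_v ∈ F_13^{9×7} and H_v ∈ F_13^{9×L_Z} with each H_v of full row rank 9, such that the correctness condition (with L = 7) holds for the eight pairs {A1,B1}, {A2,B1}, {A3,B1}, {A2,B2}, {A3,B2}, {A3,B3}, {A4,B3}, {A4,B4}, and the security condition holds for the five pairs {A1,B2}, {A1,B3}, {A2,B3}, {A2,B4}, {A3,B4}. Consequently the linear rate 7/18 is achievable for this CDS instance. -/

import Mathlib

open Matrix

/-- The row space of a matrix: the span of its rows in `Fin LZ → F`. -/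
noncomputable def rowSpan {F : Type} [Field F] {N LZ : ℕ}
    (H : Matrix (Fin N) (Fin LZ) F) : Submodule F (Fin LZ → F) :=
  Submodule.span F (Set.range H)

/-- Linear correctness condition for a (qualified) pair of nodes. -/
def CorrectPair (F : Type) [Field F] (L N LZ : ℕ)
    (Fv Fu : Matrix (Fin N) (Fin L) F) (Hv Hu : Matrix (Fin N) (Fin LZ) F) : Prop :=
  ∀ (k : ℕ) (Pv Pu : Matrix (Fin k) (Fin N) F),
    Pv * Hv = Pu * Hu →
    Pv.rank = Module.finrank F ↥(rowSpan Hv ⊓ rowSpan Hu) →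
    Pu.rank = Module.finrank F ↥(rowSpan Hv ⊓ rowSpan Hu) →
    (Pv * Fv - Pu * Fu).rank = L

/-- Linear security condition for an (unqualified) pair of nodes. -/
def SecurePair (F : Type) [Field F] (L N LZ : ℕ)
    (Fv Fu : Matrix (Fin N) (Fin L) F) (Hv Hu : Matrix (Fin N) (Fin LZ) F) : Prop :=
  ∀ (k : ℕ) (Pv Pu : Matrix (Fin k) (Fin N) F),
    Pv * Hv = Pu * Hu → Pv * Fv = Pu * Fu

instance : Fact (Nat.Prime 13) := ⟨by norm_num⟩

/-- The eight nodes of the CDS instance of Theorem 3. -/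
inductive Node8 : Type
  | A1 | A2 | A3 | A4 | B1 | B2 | B3 | B4

open Node8

/-!
Give node `v` the noise matrix in systematic form `H_v = [1 | X_v]`. A vector of
`rowSpan H_v ⊓ rowSpan H_u` is then `(c, c X_v)` with `c X_v = c X_u`. Correctness of `{v, u}` is
certified by a decoder `C` with `C X_v = C X_u` and `C (F_v - F_u) = 1`: the rank condition forces
`P_v H_v` to span the whole intersection, so `C = T P_v = T P_u` for some `T`, and then
`T (P_v F_v - P_u F_u) = 1`. Security of `{v, u}` is certified by `R₁, R₂` with
`F_w = R₁ + X_w R₂` for `w = v, u`: then `F_w = H_w R` for the common `R = [R₁; R₂]`, i.e. the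
secret is absorbed by the noise shift `z ↦ z + R s`.
-/

section Rank

variable {R : Type*} [CommSemiring R] [StrongRankCondition R] {m n : Type*} [Fintype m]
  [Fintype n] [DecidableEq m] {A : Matrix m n R} {B : Matrix n m R}

theorem rank_of_mul_eq_one_left (h : A * B = 1) : A.rank = Fintype.card m :=
  le_antisymm A.rank_le_card_height <| by
    simpa [h, rank_one] using rank_mul_le_left A B

theorem rank_of_mul_eq_one_right (h : A * B = 1) : B.rank = Fintype.card m :=
  le_antisymm B.rank_le_card_width <| by
    simpa [h, rank_one] using rank_mul_le_right A B

end Rank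

theorem mul_right_cancel_of_mul_eq_one {R : Type*} [Semiring R] {l m n : Type*} [Fintype m]
    [Fintype n] [DecidableEq m] {X Y : Matrix l m R} {H : Matrix m n R} {H' : Matrix n m R}
    (hH : H * H' = 1) (h : X * H = Y * H) : X = Y := by
  simpa [Matrix.mul_assoc, hH] using congrArg (· * H') h

section RowSpan

variable {K : Type} [Field K]

theorem rowSpan_eq_range_vecMulLinear {n k : ℕ} (B : Matrix (Fin n) (Fin k) K) :
    rowSpan B = LinearMap.range B.vecMulLinear :=
  (range_vecMulLinear B).symm

theorem rowSpan_mul_le {m n k : ℕ} (A : Matrix (Fin m) (Fin n) K)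
    (B : Matrix (Fin n) (Fin k) K) : rowSpan (A * B) ≤ rowSpan B := by
  rw [rowSpan_eq_range_vecMulLinear, rowSpan_eq_range_vecMulLinear]
  rintro _ ⟨x, rfl⟩
  exact ⟨x ᵥ* A, vecMul_vecMul x A B⟩

theorem exists_mul_eq_of_rowSpan_le {m m' k : ℕ} {A : Matrix (Fin m) (Fin k) K}
    {B : Matrix (Fin m') (Fin k) K} (h : rowSpan A ≤ rowSpan B) :
    ∃ T : Matrix (Fin m) (Fin m') K, T * B = A := by
  have hrow : ∀ i, ∃ t, t ᵥ* B = A i := fun i => by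
    simpa [rowSpan_eq_range_vecMulLinear] using h (Submodule.subset_span ⟨i, rfl⟩)
  choose T hT using hrow
  exact ⟨Matrix.of T, funext hT⟩

theorem rowSpan_mul_eq_inf {k N LZ : ℕ} {Pv Pu : Matrix (Fin k) (Fin N) K}
    {Hv Hu : Matrix (Fin N) (Fin LZ) K} {Hv' : Matrix (Fin LZ) (Fin N) K} (hv : Hv * Hv' = 1)
    (hP : Pv * Hv = Pu * Hu) (hrank : Pv.rank = Module.finrank K ↥(rowSpan Hv ⊓ rowSpan Hu)) :
    rowSpan (Pv * Hv) = rowSpan Hv ⊓ rowSpan Hu := by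
  have hPH : (Pv * Hv).rank = Pv.rank := by
    refine le_antisymm (rank_mul_le_left _ _) ?_
    simpa [Matrix.mul_assoc, hv] using rank_mul_le_left (Pv * Hv) Hv'
  refine Submodule.eq_of_le_of_finrank_eq
    (le_inf (rowSpan_mul_le _ _) (hP ▸ rowSpan_mul_le Pu Hu)) ?_
  rw [← hrank, ← hPH, rank_eq_finrank_span_row]
  rfl

theorem correctPair_of_decoder {L N LZ : ℕ} {Fv Fu : Matrix (Fin N) (Fin L) K}
    {Hv Hu : Matrix (Fin N) (Fin LZ) K} {Hv' Hu' : Matrix (Fin LZ) (Fin N) K}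
    (hv : Hv * Hv' = 1) (hu : Hu * Hu' = 1) {Cv Cu : Matrix (Fin L) (Fin N) K}
    (hC : Cv * Hv = Cu * Hu) (hF : Cv * Fv - Cu * Fu = 1) :
    CorrectPair K L N LZ Fv Fu Hv Hu := by
  intro k Pv Pu hP hrank _
  have hspan : rowSpan (Cv * Hv) ≤ rowSpan (Pv * Hv) := by
    rw [rowSpan_mul_eq_inf hv hP hrank]
    exact le_inf (rowSpan_mul_le _ _) (hC ▸ rowSpan_mul_le Cu Hu)
  obtain ⟨T, hT⟩ := exists_mul_eq_of_rowSpan_le hspan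
  have hTv : T * Pv = Cv :=
    mul_right_cancel_of_mul_eq_one hv (by rw [Matrix.mul_assoc, hT])
  have hTu : T * Pu = Cu :=
    mul_right_cancel_of_mul_eq_one hu (by rw [Matrix.mul_assoc, ← hP, hT, hC])
  have hinv : T * (Pv * Fv - Pu * Fu) = 1 := by
    rw [Matrix.mul_sub, ← Matrix.mul_assoc, ← Matrix.mul_assoc, hTv, hTu, hF]
  simpa using rank_of_mul_eq_one_right hinv

theorem securePair_of_factor {L N LZ : ℕ} {Fv Fu : Matrix (Fin N) (Fin L) K}
    {Hv Hu : Matrix (Fin N) (Fin LZ) K} (R : Matrix (Fin LZ) (Fin L) K)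
    (hv : Hv * R = Fv) (hu : Hu * R = Fu) : SecurePair K L N LZ Fv Fu Hv Hu := by
  intro k Pv Pu hP
  rw [← hv, ← hu, ← Matrix.mul_assoc, ← Matrix.mul_assoc, hP]

end RowSpan

section SystematicForm

variable {N M : ℕ}

/-- The block matrix `[1 | X]`, with its columns indexed by `Fin (N + M)`. -/
def systematicForm {R : Type*} [Zero R] [One R] (X : Matrix (Fin N) (Fin M) R) :
    Matrix (Fin N) (Fin (N + M)) R :=
  (fromCols 1 X).submatrix id finSumFinEquiv.symm

/-- The block matrix `[A; B]`, with its rows indexed by `Fin (N + M)`. -/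
def stackRows {R ι : Type*} (A : Matrix (Fin N) ι R) (B : Matrix (Fin M) ι R) :
    Matrix (Fin (N + M)) ι R :=
  (fromRows A B).submatrix finSumFinEquiv.symm id

section Semiring

variable {R : Type*} [Semiring R]

theorem systematicForm_mul_stackRows {ι : Type*} (X : Matrix (Fin N) (Fin M) R)
    (A : Matrix (Fin N) ι R) (B : Matrix (Fin M) ι R) :
    systematicForm X * stackRows A B = A + X * B := by
  rw [systematicForm, stackRows, submatrix_mul_equiv, fromCols_mul_fromRows, Matrix.one_mul]
  rfl

theorem systematicForm_mul_stackRows_one_zero (X : Matrix (Fin N) (Fin M) R) :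
    systematicForm X * stackRows (1 : Matrix (Fin N) (Fin N) R) (0 : Matrix (Fin M) (Fin N) R)
      = 1 := by
  rw [systematicForm_mul_stackRows, Matrix.mul_zero, add_zero]

theorem mul_systematicForm {L : ℕ} (C : Matrix (Fin L) (Fin N) R)
    (X : Matrix (Fin N) (Fin M) R) :
    C * systematicForm X = (fromCols C (C * X)).submatrix id finSumFinEquiv.symm := by
  rw [systematicForm, ← submatrix_id_id C, ← submatrix_mul _ _ _ _ _ Function.bijective_id,
    mul_fromCols, Matrix.mul_one, submatrix_id_id]

end Semiring

theorem rank_systematicForm {R : Type*} [CommSemiring R] [StrongRankCondition R]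
    (X : Matrix (Fin N) (Fin M) R) : (systematicForm X).rank = N := by
  simpa using rank_of_mul_eq_one_left (systematicForm_mul_stackRows_one_zero X)

variable {K : Type} [Field K] {L : ℕ} {Fv Fu : Matrix (Fin N) (Fin L) K}
  {Xv Xu : Matrix (Fin N) (Fin M) K}

theorem correctPair_systematicForm (C : Matrix (Fin L) (Fin N) K) (hX : C * Xv = C * Xu)
    (hF : C * Fv - C * Fu = 1) :
    CorrectPair K L N (N + M) Fv Fu (systematicForm Xv) (systematicForm Xu) :=
  correctPair_of_decoder (systematicForm_mul_stackRows_one_zero Xv)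
    (systematicForm_mul_stackRows_one_zero Xu)
    (by rw [mul_systematicForm, mul_systematicForm, hX]) hF

theorem securePair_systematicForm (R₁ : Matrix (Fin N) (Fin L) K)
    (R₂ : Matrix (Fin M) (Fin L) K) (hv : R₁ + Xv * R₂ = Fv) (hu : R₁ + Xu * R₂ = Fu) :
    SecurePair K L N (N + M) Fv Fu (systematicForm Xv) (systematicForm Xu) :=
  securePair_of_factor (stackRows R₁ R₂) (by rw [systematicForm_mul_stackRows, hv])
    (by rw [systematicForm_mul_stackRows, hu])

end SystematicForm

def noiseBlock : Node8 → Matrix (Fin 9) (Fin 4) (ZMod 13)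
  | A1 => !![12, 9, 3, 10;
      12, 1, 12, 2;
      12, 8, 7, 5;
      10, 11, 1, 2;
      4, 5, 3, 11;
      11, 0, 2, 7;
      3, 3, 2, 0;
      9, 11, 7, 7;
      3, 3, 3, 5]
  | A2 => !![0, 11, 0, 7;
      7, 2, 5, 6;
      1, 2, 0, 3;
      12, 2, 10, 12;
      5, 6, 8, 9;
      4, 3, 12, 5;
      4, 7, 10, 10;
      2, 10, 0, 3;
      9, 0, 11, 11]
  | A3 => !![2, 6, 11, 7;
      11, 1, 3, 6;
      5, 11, 10, 2;
      4, 8, 4, 1;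
      7, 5, 8, 8;
      4, 7, 12, 11;
      1, 9, 3, 1;
      0, 5, 0, 8;
      6, 10, 4, 1]
  | A4 => !![3, 2, 3, 0;
      10, 7, 9, 1;
      11, 5, 12, 8;
      2, 7, 2, 2;
      5, 0, 3, 6;
      5, 0, 2, 9;
      10, 10, 6, 0;
      12, 2, 12, 6;
      8, 4, 10, 6]
  | B1 => !![5, 4, 10, 5;
      9, 7, 12, 9;
      0, 6, 7, 7;
      3, 12, 1, 1;
      7, 11, 2, 12;
      12, 10, 1, 4;
      0, 10, 3, 12;
      7, 3, 8, 8;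
      4, 7, 9, 11]
  | B2 => !![0, 12, 10, 6;
      7, 10, 8, 1;
      1, 7, 2, 10;
      12, 5, 11, 0;
      5, 3, 4, 12;
      4, 8, 1, 12;
      4, 6, 10, 2;
      2, 4, 11, 1;
      9, 7, 11, 2]
  | B3 => !![8, 7, 8, 0;
      3, 6, 12, 12;
      9, 8, 1, 2;
      5, 5, 1, 8;
      1, 3, 2, 8;
      6, 0, 10, 5;
      6, 5, 9, 9;
      11, 11, 6, 7;
      1, 2, 7, 0]
  | B4 => !![6, 11, 1, 11;
      0, 3, 2, 0;
      2, 4, 3, 4;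
      0, 1, 1, 9;
      9, 12, 4, 0;
      10, 2, 3, 10;
      10, 10, 7, 5;
      7, 0, 10, 0;
      4, 5, 12, 1]

def secretCoeff : Node8 → Matrix (Fin 9) (Fin 7) (ZMod 13)
  | A1 => !![8, 6, 10, 0, 12, 10, 11;
      11, 4, 6, 10, 9, 0, 5;
      3, 6, 8, 1, 12, 1, 0;
      0, 9, 9, 2, 8, 9, 5;
      7, 7, 3, 1, 5, 7, 4;
      10, 9, 12, 1, 6, 7, 2;
      1, 6, 6, 4, 7, 5, 12;
      12, 12, 4, 9, 4, 0, 6;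
      7, 7, 2, 2, 0, 7, 0]
  | A2 => !![11, 5, 4, 4, 6, 6, 12;
      3, 10, 6, 6, 4, 9, 5;
      1, 7, 3, 6, 12, 3, 3;
      3, 6, 1, 12, 4, 9, 8;
      8, 0, 2, 1, 8, 4, 0;
      6, 9, 4, 5, 9, 6, 1;
      8, 1, 1, 4, 0, 3, 0;
      10, 8, 12, 7, 7, 7, 3;
      8, 9, 0, 0, 2, 7, 5]
  | A3 => !![0, 9, 2, 5, 12, 8, 4;
      9, 7, 0, 6, 12, 3, 12;
      12, 3, 1, 7, 0, 6, 10;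
      10, 10, 10, 12, 0, 12, 4;
      4, 12, 12, 8, 11, 1, 9;
      4, 5, 9, 7, 4, 9, 7;
      5, 4, 2, 4, 11, 12, 1;
      6, 3, 11, 0, 5, 11, 2;
      6, 0, 10, 0, 7, 11, 12]
  | A4 => !![12, 3, 2, 2, 8, 5, 6;
      8, 9, 8, 10, 9, 1, 11;
      12, 9, 10, 3, 1, 12, 7;
      7, 3, 11, 8, 4, 6, 0;
      4, 6, 10, 7, 9, 7, 5;
      3, 3, 5, 9, 2, 3, 8;
      0, 8, 10, 6, 2, 7, 10;
      9, 12, 6, 4, 3, 3, 9;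
      5, 12, 7, 10, 1, 12, 0]
  | B1 => !![0, 11, 1, 1, 12, 11, 2;
      3, 1, 5, 5, 2, 12, 8;
      10, 0, 0, 7, 9, 3, 9;
      4, 1, 11, 2, 0, 1, 9;
      3, 12, 3, 11, 11, 0, 3;
      3, 9, 9, 11, 12, 9, 4;
      8, 3, 3, 12, 8, 2, 10;
      10, 11, 6, 5, 5, 0, 0;
      0, 1, 12, 0, 3, 11, 7]
  | B2 => !![2, 12, 3, 2, 3, 6, 0;
      2, 9, 5, 5, 1, 3, 12;
      5, 8, 10, 9, 5, 2, 5;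
      7, 5, 8, 1, 12, 1, 9;
      5, 2, 3, 12, 1, 11, 10;
      12, 2, 1, 7, 3, 11, 12;
      11, 11, 9, 11, 9, 5, 1;
      7, 1, 11, 8, 5, 6, 10;
      4, 6, 8, 4, 4, 10, 4]
  | B3 => !![9, 4, 6, 7, 12, 11, 9;
      5, 2, 6, 3, 0, 1, 0;
      0, 5, 4, 7, 9, 4, 10;
      5, 6, 1, 0, 1, 4, 0;
      9, 3, 11, 3, 1, 12, 6;
      12, 1, 10, 7, 12, 9, 9;
      7, 3, 11, 11, 1, 8, 12;
      9, 3, 4, 5, 7, 8, 6;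
      0, 12, 10, 4, 12, 12, 4]
  | B4 => !![4, 1, 9, 10, 12, 1, 3;
      2, 11, 10, 0, 3, 9, 10;
      9, 9, 5, 2, 0, 2, 12;
      4, 5, 2, 6, 2, 0, 4;
      7, 9, 4, 12, 11, 3, 3;
      7, 7, 12, 3, 8, 12, 9;
      5, 7, 9, 6, 2, 8, 11;
      1, 8, 12, 5, 10, 2, 1;
      5, 3, 3, 9, 5, 5, 7]

def decoderA1B1 : Matrix (Fin 7) (Fin 9) (ZMod 13) :=
  !![5, 11, 12, 1, 4, 7, 4, 0, 4;
    0, 9, 10, 3, 1, 6, 9, 4, 12;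
    0, 5, 12, 1, 12, 12, 3, 12, 8;
    0, 6, 2, 6, 7, 0, 1, 9, 6;
    1, 7, 10, 11, 12, 10, 12, 2, 11;
    12, 9, 2, 2, 3, 8, 1, 6, 4;
    2, 4, 5, 5, 1, 0, 12, 12, 9]

def decoderA2B1 : Matrix (Fin 7) (Fin 9) (ZMod 13) :=
  !![6, 8, 1, 5, 12, 1, 0, 6, 2;
    9, 0, 10, 1, 12, 0, 0, 1, 11;
    10, 5, 4, 1, 0, 7, 7, 9, 11;
    2, 11, 9, 8, 12, 12, 9, 4, 11;
    0, 8, 4, 0, 3, 7, 1, 12, 0;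
    12, 0, 1, 3, 4, 1, 2, 5, 0;
    1, 8, 7, 2, 5, 6, 9, 2, 3]

def decoderA3B1 : Matrix (Fin 7) (Fin 9) (ZMod 13) :=
  !![2, 6, 7, 5, 11, 7, 1, 12, 1;
    2, 6, 8, 0, 3, 0, 6, 7, 5;
    8, 7, 0, 2, 7, 4, 9, 3, 0;
    5, 12, 5, 9, 3, 2, 4, 4, 5;
    5, 6, 0, 10, 6, 0, 7, 0, 6;
    3, 0, 5, 10, 9, 8, 6, 1, 0;
    10, 9, 4, 12, 5, 0, 1, 11, 2]

def decoderA2B2 : Matrix (Fin 7) (Fin 9) (ZMod 13) :=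
  !![11, 7, 1, 0, 3, 12, 10, 1, 7;
    8, 5, 10, 0, 0, 9, 5, 8, 2;
    12, 0, 9, 5, 8, 1, 8, 11, 3;
    11, 0, 12, 9, 8, 11, 8, 8, 10;
    8, 5, 7, 0, 9, 0, 5, 4, 11;
    12, 12, 0, 8, 2, 5, 1, 5, 7;
    6, 3, 2, 7, 1, 10, 5, 9, 6]

def decoderA3B2 : Matrix (Fin 7) (Fin 9) (ZMod 13) :=
  !![10, 9, 10, 6, 8, 0, 9, 10, 10;
    1, 3, 1, 7, 3, 10, 10, 8, 0;
    8, 11, 1, 2, 4, 3, 12, 2, 1;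
    5, 5, 11, 6, 10, 7, 8, 7, 7;
    12, 5, 11, 7, 10, 1, 8, 6, 1;
    8, 4, 4, 2, 3, 3, 3, 5, 2;
    3, 8, 9, 12, 12, 3, 2, 5, 4]

def decoderA3B3 : Matrix (Fin 7) (Fin 9) (ZMod 13) :=
  !![7, 3, 10, 7, 3, 2, 4, 5, 7;
    1, 5, 0, 6, 0, 12, 5, 9, 11;
    7, 11, 11, 10, 9, 2, 6, 1, 5;
    11, 12, 11, 8, 6, 8, 12, 10, 11;
    8, 0, 12, 8, 3, 1, 8, 2, 4;
    5, 2, 7, 2, 2, 12, 6, 3, 3;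
    4, 12, 6, 1, 1, 9, 11, 5, 2]

def decoderA4B3 : Matrix (Fin 7) (Fin 9) (ZMod 13) :=
  !![10, 5, 4, 8, 11, 4, 3, 2, 6;
    7, 10, 3, 10, 8, 6, 2, 3, 8;
    4, 11, 12, 7, 8, 1, 8, 9, 9;
    8, 9, 4, 6, 10, 3, 7, 5, 3;
    10, 12, 12, 12, 2, 11, 1, 7, 5;
    3, 12, 9, 7, 9, 6, 12, 0, 11;
    2, 12, 10, 0, 2, 4, 5, 11, 2]

def decoderA4B4 : Matrix (Fin 7) (Fin 9) (ZMod 13) :=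
  !![10, 3, 1, 3, 9, 7, 10, 6, 0;
    9, 5, 7, 12, 12, 7, 0, 6, 2;
    1, 7, 8, 3, 0, 12, 7, 0, 8;
    12, 1, 11, 12, 12, 12, 12, 8, 9;
    0, 9, 12, 10, 6, 1, 6, 11, 4;
    11, 6, 11, 11, 1, 10, 10, 9, 1;
    0, 11, 5, 11, 4, 1, 10, 7, 1]

def noiseShiftA1B2 : Matrix (Fin 9) (Fin 7) (ZMod 13) :=
  !![7, 2, 5, 11, 10, 12, 2;
    2, 5, 3, 8, 9, 8, 5;
    10, 12, 8, 3, 12, 5, 5;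
    9, 7, 3, 5, 12, 3, 10;
    5, 0, 0, 1, 6, 8, 6;
    3, 1, 7, 7, 3, 0, 2;
    3, 5, 11, 12, 5, 8, 0;
    4, 11, 11, 0, 8, 11, 2;
    4, 7, 5, 9, 7, 4, 0]

def noiseShiftA1B2' : Matrix (Fin 4) (Fin 7) (ZMod 13) :=
  !![11, 8, 7, 11, 5, 12, 9;
    0, 6, 8, 12, 12, 11, 4;
    2, 12, 1, 7, 8, 3, 6;
    11, 0, 8, 4, 7, 11, 12]

def noiseShiftA1B3 : Matrix (Fin 9) (Fin 7) (ZMod 13) :=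
  !![4, 9, 3, 6, 1, 8, 4;
    0, 0, 10, 2, 4, 1, 8;
    1, 9, 8, 10, 4, 9, 3;
    11, 7, 8, 9, 1, 2, 7;
    0, 0, 7, 2, 4, 3, 2;
    11, 4, 0, 0, 8, 2, 11;
    3, 10, 7, 2, 4, 2, 11;
    0, 5, 4, 7, 5, 4, 9;
    4, 9, 8, 8, 7, 5, 2]

def noiseShiftA1B3' : Matrix (Fin 4) (Fin 7) (ZMod 13) :=
  !![9, 4, 12, 4, 12, 12, 6;
    11, 5, 2, 6, 1, 0, 8;
    8, 4, 11, 12, 8, 3, 12;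
    2, 10, 2, 9, 12, 7, 10]

def noiseShiftA2B3 : Matrix (Fin 9) (Fin 7) (ZMod 13) :=
  !![0, 7, 11, 1, 1, 11, 5;
    12, 4, 0, 11, 6, 12, 4;
    4, 3, 7, 4, 12, 0, 2;
    0, 0, 0, 3, 0, 3, 2;
    6, 8, 7, 12, 6, 4, 5;
    4, 0, 8, 5, 1, 2, 2;
    11, 3, 7, 12, 1, 3, 3;
    6, 8, 7, 7, 1, 7, 5;
    0, 2, 5, 3, 1, 7, 2]

def noiseShiftA2B3' : Matrix (Fin 4) (Fin 7) (ZMod 13) :=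
  !![0, 4, 5, 8, 2, 1, 0;
    9, 12, 7, 2, 7, 6, 11;
    3, 3, 11, 4, 3, 10, 12;
    6, 5, 1, 1, 12, 1, 6]

def noiseShiftA2B4 : Matrix (Fin 9) (Fin 7) (ZMod 13) :=
  !![5, 5, 1, 9, 2, 2, 4;
    7, 11, 8, 0, 3, 1, 11;
    8, 0, 7, 12, 0, 3, 3;
    3, 9, 0, 9, 4, 10, 2;
    7, 7, 2, 0, 6, 0, 3;
    3, 4, 7, 8, 7, 8, 8;
    3, 6, 11, 2, 0, 6, 10;
    7, 12, 10, 7, 2, 2, 2;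
    0, 1, 8, 1, 6, 6, 7]

def noiseShiftA2B4' : Matrix (Fin 4) (Fin 7) (ZMod 13) :=
  !![7, 4, 0, 8, 4, 9, 10;
    2, 3, 4, 3, 10, 6, 7;
    1, 2, 8, 2, 11, 8, 2;
    7, 12, 9, 2, 9, 6, 5]

def noiseShiftA3B4 : Matrix (Fin 9) (Fin 7) (ZMod 13) :=
  !![4, 1, 12, 1, 7, 3, 7;
    9, 10, 10, 6, 8, 4, 3;
    9, 12, 10, 11, 10, 7, 8;
    2, 9, 12, 7, 8, 10, 7;
    12, 7, 11, 4, 3, 1, 12;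
    1, 1, 11, 6, 4, 1, 0;
    4, 1, 7, 6, 6, 9, 10;
    2, 12, 2, 6, 5, 5, 12;
    0, 2, 6, 1, 10, 6, 3]

def noiseShiftA3B4' : Matrix (Fin 4) (Fin 7) (ZMod 13) :=
  !![5, 3, 9, 4, 1, 3, 2;
    7, 2, 7, 6, 8, 5, 4;
    12, 4, 9, 1, 5, 8, 4;
    1, 9, 0, 2, 8, 9, 6]

/-- **Theorem 3, achievability half.** There is a linear CDS scheme over `𝔽₁₃`
with secret length `L = 7` and signal length `N = 9` for the CDS instance on
nodes `A1, A2, A3, A4, B1, B2, B3, B4` with qualified edges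
`{A1,B1}, {A2,B1}, {A3,B1}, {A2,B2}, {A3,B2}, {A3,B3}, {A4,B3}, {A4,B4}` and
unqualified edges `{A1,B2}, {A1,B3}, {A2,B3}, {A2,B4}, {A3,B4}`; hence the
linear rate `7/18` is achievable. -/
theorem cds_fig3_achievability :
    ∃ (LZ : ℕ), 0 < LZ ∧
      ∃ (Fm : Node8 → Matrix (Fin 9) (Fin 7) (ZMod 13))
        (Hm : Node8 → Matrix (Fin 9) (Fin LZ) (ZMod 13)),
        (∀ v, (Hm v).rank = 9) ∧
        CorrectPair (ZMod 13) 7 9 LZ (Fm A1) (Fm B1) (Hm A1) (Hm B1) ∧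
        CorrectPair (ZMod 13) 7 9 LZ (Fm A2) (Fm B1) (Hm A2) (Hm B1) ∧
        CorrectPair (ZMod 13) 7 9 LZ (Fm A3) (Fm B1) (Hm A3) (Hm B1) ∧
        CorrectPair (ZMod 13) 7 9 LZ (Fm A2) (Fm B2) (Hm A2) (Hm B2) ∧
        CorrectPair (ZMod 13) 7 9 LZ (Fm A3) (Fm B2) (Hm A3) (Hm B2) ∧
        CorrectPair (ZMod 13) 7 9 LZ (Fm A3) (Fm B3) (Hm A3) (Hm B3) ∧
        CorrectPair (ZMod 13) 7 9 LZ (Fm A4) (Fm B3) (Hm A4) (Hm B3) ∧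
        CorrectPair (ZMod 13) 7 9 LZ (Fm A4) (Fm B4) (Hm A4) (Hm B4) ∧
        SecurePair (ZMod 13) 7 9 LZ (Fm A1) (Fm B2) (Hm A1) (Hm B2) ∧
        SecurePair (ZMod 13) 7 9 LZ (Fm A1) (Fm B3) (Hm A1) (Hm B3) ∧
        SecurePair (ZMod 13) 7 9 LZ (Fm A2) (Fm B3) (Hm A2) (Hm B3) ∧
        SecurePair (ZMod 13) 7 9 LZ (Fm A2) (Fm B4) (Hm A2) (Hm B4) ∧
        SecurePair (ZMod 13) 7 9 LZ (Fm A3) (Fm B4) (Hm A3) (Hm B4) := by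
  refine ⟨9 + 4, by norm_num, secretCoeff, fun v => systematicForm (noiseBlock v),
    fun v => rank_systematicForm _,
    correctPair_systematicForm decoderA1B1 (by decide) (by decide),
    correctPair_systematicForm decoderA2B1 (by decide) (by decide),
    correctPair_systematicForm decoderA3B1 (by decide) (by decide),
    correctPair_systematicForm decoderA2B2 (by decide) (by decide),
    correctPair_systematicForm decoderA3B2 (by decide) (by decide),
    correctPair_systematicForm decoderA3B3 (by decide) (by decide),
    correctPair_systematicForm decoderA4B3 (by decide) (by decide),
    correctPair_systematicForm decoderA4B4 (by decide) (by decide),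
    securePair_systematicForm noiseShiftA1B2 noiseShiftA1B2' (by decide) (by decide),
    securePair_systematicForm noiseShiftA1B3 noiseShiftA1B3' (by decide) (by decide),
    securePair_systematicForm noiseShiftA2B3 noiseShiftA2B3' (by decide) (by decide),
    securePair_systematicForm noiseShiftA2B4 noiseShiftA2B4' (by decide) (by decide),
    securePair_systematicForm noiseShiftA3B4 noiseShiftA3B4' (by decide) (by decide)⟩
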